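/- arXiv:2401.10378 — 4 statements merged into one kernel-verified Lean document; each statement's English description precedes it below -/
import Mathlib

section
/- Let ν be a star-periodic kneading sequence of period p, i.e. ν = (ν_1 ... ν_{p-1} ⋆)^∞ where ν_1,...,ν_{p-1} lie in the alphabet A_d. If there exist q and q' strictly dividing p, with symbols e, e' ∈ A_d, such that (ν_1...ν_{p-1} e)^∞ has exact period q and (ν_1...ν_{p-1} e')^∞ has exact period q', then q = q' and e = e'. (Uniqueness of the base period of a bifurcation.) -/
/-- `q` is the exact (minimal) period of the sequence `x`. -/
def IsExactPeriod {A : Type*} (x : ℕ → A) (q : ℕ) : Prop :=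
  0 < q ∧ (∀ k, x (k + q) = x k) ∧ ∀ r, 0 < r → (∀ k, x (k + r) = x k) → q ≤ r

/-- `x` has period `q` on the window `[0, n)`. -/
def PerOn {A : Type*} (x : ℕ → A) (q n : ℕ) : Prop := ∀ i, i + q < n → x (i + q) = x i

lemma perOn_mod {A : Type*} {x : ℕ → A} {q n : ℕ} (hq : 0 < q) (h : PerOn x q n) :
    ∀ j, j < n → x j = x (j % q) := by
  intro j
  induction j using Nat.strong_induction_on with
  | _ j ih =>
    intro hj
    rcases lt_or_ge j q with h1 | h1
    · rw [Nat.mod_eq_of_lt h1]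
    · have e1 : j - q + q = j := by omega
      have h2 := h (j - q) (by omega)
      rw [e1] at h2
      have e2 : j % q = (j - q) % q := by
        conv_lhs => rw [← e1]
        rw [Nat.add_mod_right]
      rw [h2, e2]
      exact ih (j - q) (by omega) (by omega)

lemma period_mod {A : Type*} {x : ℕ → A} {q : ℕ} (hq : 0 < q) (hx : ∀ k, x (k + q) = x k) :
    ∀ j, x j = x (j % q) := by
  intro j
  induction j using Nat.strong_induction_on with
  | _ j ih =>
    rcases lt_or_ge j q with h1 | h1
    · rw [Nat.mod_eq_of_lt h1]
    · have e1 : j - q + q = j := by omega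
      have h2 := hx (j - q)
      rw [e1] at h2
      have e2 : j % q = (j - q) % q := by
        conv_lhs => rw [← e1]
        rw [Nat.add_mod_right]
      rw [h2, e2]
      exact ih (j - q) (by omega)

/-- Fine–Wilf theorem (sorted version): a word of length `n ≥ q + q' - gcd q q'`
with periods `q ≤ q'` has period `gcd q q'`. -/
lemma fw_aux {A : Type*} : ∀ q' q : ℕ, ∀ (x : ℕ → A) (n : ℕ), 0 < q → q ≤ q' →
    q + q' - Nat.gcd q q' ≤ n → PerOn x q n → PerOn x q' n → PerOn x (Nat.gcd q q') n := by
  intro q'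
  induction q' using Nat.strong_induction_on with
  | _ q' ih =>
    intro q x n hq hle hn h1 h2
    rcases eq_or_lt_of_le hle with heq | hlt
    · subst heq; rw [Nat.gcd_self]; exact h1
    by_cases hgq : Nat.gcd q q' = q
    · rw [hgq]; exact h1
    set d := q' - q with hdd
    have hd : 0 < d := by omega
    have hgg : Nat.gcd q d = Nat.gcd q q' := by
      rw [hdd, Nat.gcd_sub_self_right (le_of_lt hlt)]
    have hgle : Nat.gcd q q' ≤ q := Nat.le_of_dvd hq (Nat.gcd_dvd_left _ _)
    have hgdvdq : Nat.gcd q q' ∣ q := Nat.gcd_dvd_left _ _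
    have hg0 : 0 < Nat.gcd q q' := Nat.gcd_pos_of_pos_left _ hq
    have hgd : Nat.gcd q q' ∣ d := by
      rw [hdd]; exact Nat.dvd_sub (Nat.gcd_dvd_right _ _) (Nat.gcd_dvd_left _ _)
    have hgled : Nat.gcd q q' ≤ d := Nat.le_of_dvd hd hgd
    have hP1 : PerOn x q (n - q) := fun i hi => h1 i (by omega)
    have hP2 : PerOn x d (n - q) := by
      intro i hi
      have a1 := h1 (i + d) (by omega)
      have a2 := h2 i (by omega)
      have e : i + d + q = i + q' := by omega
      rw [e] at a1
      rw [← a1]; exact a2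
    have hpre : PerOn x (Nat.gcd q q') (n - q) := by
      rcases le_total q d with h' | h'
      · have := ih d (by omega) q x (n - q) hq h' (by rw [hgg]; omega) hP1 hP2
        rwa [hgg] at this
      · have := ih q hlt d x (n - q) hd h'
          (by rw [Nat.gcd_comm, hgg]; omega) hP2 hP1
        rwa [Nat.gcd_comm, hgg] at this
    have hn2 : 2 * q ≤ n := by omega
    intro i hi
    have hmq := perOn_mod hq h1
    have hmg := perOn_mod hg0 hpre
    have b1 := hmq (i + Nat.gcd q q') hi
    have b2 := hmq i (by omega)
    have c1 := hmg ((i + Nat.gcd q q') % q)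
      (by have := Nat.mod_lt (i + Nat.gcd q q') hq; omega)
    have c2 := hmg (i % q) (by have := Nat.mod_lt i hq; omega)
    rw [b1, b2, c1, c2]
    have : (i + Nat.gcd q q') % q % Nat.gcd q q' = i % q % Nat.gcd q q' := by
      rw [Nat.mod_mod_of_dvd _ hgdvdq, Nat.mod_mod_of_dvd _ hgdvdq, Nat.add_mod_right]
    rw [this]

/-- Fine–Wilf theorem. -/
lemma fine_wilf {A : Type*} {x : ℕ → A} {q q' n : ℕ} (hq : 0 < q) (hq' : 0 < q')
    (hn : q + q' - Nat.gcd q q' ≤ n) (h1 : PerOn x q n) (h2 : PerOn x q' n) :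
    PerOn x (Nat.gcd q q') n := by
  rcases le_total q q' with h | h
  · exact fw_aux q' q x n hq h hn h1 h2
  · rw [Nat.gcd_comm]
    exact fw_aux q q' x n hq' h (by rw [Nat.gcd_comm]; omega) h2 h1

/-- If `x` has full period `q`, `x'` has full period `q'`, `2q ≤ p`, `2q' ≤ p`,
and they agree on `[0, p-1)`, then `x` has full period `gcd q q'`. -/
lemma period_gcd {A : Type*} {x x' : ℕ → A} {p q q' : ℕ}
    (hq : 0 < q) (hq' : 0 < q') (h2q : 2 * q ≤ p) (h2q' : 2 * q' ≤ p)
    (hx : ∀ k, x (k + q) = x k) (hx' : ∀ k, x' (k + q') = x' k)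
    (hagree : ∀ k, k + 1 < p → x k = x' k) :
    ∀ k, x (k + Nat.gcd q q') = x k := by
  have h1 : PerOn x q (p - 1) := fun i _ => hx i
  have h2 : PerOn x q' (p - 1) := by
    intro i hi
    rw [hagree (i + q') (by omega), hx', ← hagree i (by omega)]
  have hg0 : 0 < Nat.gcd q q' := Nat.gcd_pos_of_pos_left _ hq
  have hgdvdq : Nat.gcd q q' ∣ q := Nat.gcd_dvd_left _ _
  have hpre := fine_wilf hq hq' (by omega) h1 h2
  intro k
  have fm := period_mod hq hx
  have hmg := perOn_mod hg0 hpre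
  have t1 := fm (k + Nat.gcd q q')
  have t2 := fm k
  have u1 := hmg ((k + Nat.gcd q q') % q)
    (by have := Nat.mod_lt (k + Nat.gcd q q') hq; omega)
  have u2 := hmg (k % q) (by have := Nat.mod_lt k hq; omega)
  have e : (k + Nat.gcd q q') % q % Nat.gcd q q' = k % q % Nat.gcd q q' := by
    rw [Nat.mod_mod_of_dvd _ hgdvdq, Nat.mod_mod_of_dvd _ hgdvdq, Nat.add_mod_right]
  rw [t1, t2, u1, u2, e]

/-- Uniqueness of the base period of a bifurcation: if ν is a ⋆-periodic kneading
sequence of period p (⋆ encoded by `none`, occurring exactly at positions k with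
p ∣ k+1), and replacing ⋆ by e yields a sequence of exact period q strictly
dividing p, and replacing ⋆ by e' yields exact period q' strictly dividing p,
then q = q' and e = e'. -/
theorem bifurcation_base_period_unique {A : Type*} [Fintype A] (hA : 2 ≤ Fintype.card A)
    (ν : ℕ → Option A) (p : ℕ) (hp : 0 < p)
    (hper : ∀ k, ν (k + p) = ν k)
    (hstar : ∀ k, ν k = none ↔ p ∣ (k + 1))
    (q q' : ℕ) (e e' : A)
    (hq : q ∣ p) (hqp : q ≠ p)
    (hq' : q' ∣ p) (hq'p : q' ≠ p)
    (he : IsExactPeriod (fun k => (ν k).getD e) q)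
    (he' : IsExactPeriod (fun k => (ν k).getD e') q') :
    q = q' ∧ e = e' := by
  set x := fun k => (ν k).getD e with hxdef
  set x' := fun k => (ν k).getD e' with hx'def
  obtain ⟨hq0, hxq, hxmin⟩ := he
  obtain ⟨hq'0, hx'q, hx'min⟩ := he'
  have hqltp : q < p := lt_of_le_of_ne (Nat.le_of_dvd hp hq) hqp
  have hq'ltp : q' < p := lt_of_le_of_ne (Nat.le_of_dvd hp hq') hq'p
  have h2q : 2 * q ≤ p := by
    obtain ⟨m, hm⟩ := hq
    rcases Nat.lt_or_ge m 2 with h | h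
    · interval_cases m <;> omega
    · calc 2 * q = q * 2 := by ring
        _ ≤ q * m := Nat.mul_le_mul_left q h
        _ = p := hm.symm
  have h2q' : 2 * q' ≤ p := by
    obtain ⟨m, hm⟩ := hq'
    rcases Nat.lt_or_ge m 2 with h | h
    · interval_cases m <;> omega
    · calc 2 * q' = q' * 2 := by ring
        _ ≤ q' * m := Nat.mul_le_mul_left q' h
        _ = p := hm.symm
  have hagree : ∀ k, k + 1 < p → x k = x' k := by
    intro k hk
    have hne : ν k ≠ none := by
      rw [Ne, hstar]
      intro hdvd
      exact absurd (Nat.le_of_dvd (by omega) hdvd) (by omega)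
    obtain ⟨a, ha⟩ := Option.ne_none_iff_exists'.mp hne
    simp [hxdef, hx'def, ha]
  have hgq : ∀ k, x (k + Nat.gcd q q') = x k :=
    period_gcd hq0 hq'0 h2q h2q' hxq hx'q hagree
  have hgq' : ∀ k, x' (k + Nat.gcd q' q) = x' k :=
    period_gcd hq'0 hq0 h2q' h2q hx'q hxq (fun k hk => (hagree k hk).symm)
  have hg0 : 0 < Nat.gcd q q' := Nat.gcd_pos_of_pos_left _ hq0
  have hg0' : 0 < Nat.gcd q' q := Nat.gcd_pos_of_pos_left _ hq'0
  have hq_le : q ≤ Nat.gcd q q' := hxmin _ hg0 hgq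
  have hq'_le : q' ≤ Nat.gcd q' q := hx'min _ hg0' hgq'
  have e1 : Nat.gcd q q' = q :=
    le_antisymm (Nat.le_of_dvd hq0 (Nat.gcd_dvd_left _ _)) hq_le
  have e2 : Nat.gcd q' q = q' :=
    le_antisymm (Nat.le_of_dvd hq'0 (Nat.gcd_dvd_left _ _)) hq'_le
  rw [Nat.gcd_comm] at e2
  have hqq' : q = q' := by omega
  refine ⟨hqq', ?_⟩
  subst hqq'
  -- now show e = e'
  have hstarp : ν (p - 1) = none := by
    rw [hstar]
    have : p - 1 + 1 = p := by omega
    rw [this]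
  have hxp : x (p - 1) = e := by simp [hxdef, hstarp]
  have hx'p : x' (p - 1) = e' := by simp [hx'def, hstarp]
  have hres : (p - 1) % q = q - 1 := by
    obtain ⟨m, hm⟩ := hq
    have hm1 : 1 ≤ m := by
      rcases Nat.eq_zero_or_pos m with h | h
      · subst h; omega
      · exact h
    have hqm : q * m = q * (m - 1) + q := by
      conv_lhs => rw [show m = (m - 1) + 1 by omega]
      ring
    have hdecomp : p - 1 = q - 1 + q * (m - 1) := by omega
    rw [hdecomp, Nat.add_mul_mod_self_left, Nat.mod_eq_of_lt (by omega)]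
  have fmx := period_mod hq0 hxq
  have fmx' := period_mod hq'0 hx'q
  have key : x (q - 1) = x' (q - 1) := hagree (q - 1) (by omega)
  have c1 : x (p - 1) = x (q - 1) := by rw [fmx (p - 1), hres]
  have c2 : x' (p - 1) = x' (q - 1) := by rw [fmx' (p - 1), hres]
  rw [← hxp, ← hx'p, c1, c2, key]
end

section
/- Let ν be a star-periodic kneading sequence of period p over A_d ∪ {⋆}. If w⋆ν and w'⋆ν are two precritical points (with w, w' finite words over A_d) such that diff(w⋆ν, w'⋆ν) = ∞ (agreement at every position, where ⋆ matches any symbol), then the difference of depths t = | |w| − |w'| | is such that ν is a bifurcation from some period dividing gcd(t, p); in particular if ν is not a bifurcation then diff(w⋆ν, w'⋆ν) < ∞ whenever t is not a multiple of p. -/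
/-- Two symbols match when they are not two distinct non-⋆ symbols
(⋆, encoded by `none`, is a wildcard). -/
def OptMatch {A : Type*} (u v : Option A) : Prop :=
  ∀ a b : A, u = some a → v = some b → a = b

/-- Two sequences agree at every position (`diff = ∞`), with ⋆ as wildcard. -/
def Agree {A : Type*} (x y : ℕ → Option A) : Prop :=
  ∀ k, OptMatch (x k) (y k)

/-- The itinerary of the precritical point `w⋆ν`. -/
def pcSeq {A : Type*} (ν : ℕ → Option A) (w : List A) : ℕ → Option A :=
  fun k =>
    if h : k < w.length then some (w.get ⟨k, h⟩)
    else if k = w.length then none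
    else ν (k - w.length - 1)

/-- `ν` is a bifurcation from period `q`: `q` strictly divides `p` and replacing
each ⋆ by some symbol `e` yields a sequence of exact period `q`. -/
def IsBifurcationFrom {A : Type*} (ν : ℕ → Option A) (p q : ℕ) : Prop :=
  q ∣ p ∧ q ≠ p ∧ ∃ e : A, IsExactPeriod (fun k => (ν k).getD e) q

/-- iterated periodicity -/
lemma aib_periodN {A : Type*} (x : ℕ → A) (q : ℕ) (hq : ∀ k, x (k + q) = x k) :
    ∀ N k, x (k + N * q) = x k := by
  intro N
  induction N with
  | zero => simp
  | succ n ih =>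
    intro k
    have h : k + (n + 1) * q = (k + n * q) + q := by ring
    rw [h, hq, ih]

/-- any period is divisible by the minimal period -/
lemma aib_exists_exact {A : Type*} (x : ℕ → A) (g : ℕ) (hg : 0 < g)
    (hx : ∀ k, x (k + g) = x k) : ∃ q, IsExactPeriod x q ∧ q ∣ g := by
  classical
  have hP : ∃ r, 0 < r ∧ ∀ k, x (k + r) = x k := ⟨g, hg, hx⟩
  set q := Nat.find hP with hqdef
  obtain ⟨hq0, hqper⟩ := Nat.find_spec hP
  have hmin : ∀ r, 0 < r → (∀ k, x (k + r) = x k) → q ≤ r :=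
    fun r h1 h2 => Nat.find_min' hP ⟨h1, h2⟩
  have hmodper : ∀ k, x (k + g % q) = x k := by
    intro k
    calc x (k + g % q) = x (k + g % q + g / q * q) := (aib_periodN x q hqper (g / q) _).symm
    _ = x (k + g) := by rw [add_assoc, Nat.mod_add_div']
    _ = x k := hx k
  have hdvd : q ∣ g := by
    rcases Nat.eq_zero_or_pos (g % q) with h0 | h0
    · exact Nat.dvd_of_mod_eq_zero h0
    · have h1 := hmin _ h0 hmodper
      have h2 : g % q < q := Nat.mod_lt g hq0
      omega
  exact ⟨q, ⟨hq0, hqper, hmin⟩, hdvd⟩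

lemma aib_main_aux {A : Type*} (ν : ℕ → Option A) (p t : ℕ) (hp : 0 < p)
    (hper : ∀ k, ν (k + p) = ν k)
    (hstar : ∀ k, ν k = none ↔ p ∣ (k + 1))
    (hpt : ¬ p ∣ t)
    (hM : ∀ j, ν (j + t) ≠ none → ν j ≠ none → ν (j + t) = ν j) :
    ∃ q, IsBifurcationFrom ν p q ∧ q ∣ Nat.gcd t p := by
  classical
  have ht : 0 < t := by
    rcases Nat.eq_zero_or_pos t with h | h
    · exact absurd (h ▸ dvd_zero p) hpt
    · exact h
  set g := Nat.gcd t p with hgdef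
  have hg : 0 < g := Nat.gcd_pos_of_pos_right t hp
  have hgt : g ∣ t := Nat.gcd_dvd_left t p
  have hgp : g ∣ p := Nat.gcd_dvd_right t p
  have hglt : g < p := by
    rcases lt_or_eq_of_le (Nat.le_of_dvd hp hgp) with h | h
    · exact h
    · exact absurd (h ▸ hgt) hpt
  set p' := p / g with hp'def
  set t' := t / g with ht'def
  have hpp' : p' * g = p := Nat.div_mul_cancel hgp
  have htt' : t' * g = t := Nat.div_mul_cancel hgt
  have hco : Nat.Coprime t' p' := Nat.coprime_div_gcd_div_gcd hg
  have hp'2 : 2 ≤ p' := by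
    rcases Nat.lt_or_ge p' 2 with h | h
    · interval_cases p' <;> omega
    · exact h
  -- periodicity modulo p
  have hmod : ∀ j, ν j = ν (j % p) := by
    intro j
    conv_lhs => rw [← Nat.mod_add_div' j p]
    exact aib_periodN ν p hper (j / p) (j % p)
  -- the chain lemma
  have chain : ∀ k j, ν j ≠ none → (∀ i, 0 < i → i ≤ k → ¬ p ∣ (j + i * t + 1)) →
      ν (j + k * t) = ν j := by
    intro k
    induction k with
    | zero => intro j _ _; simp
    | succ n ih =>
      intro j hj hns
      have h1 : ν (j + n * t) = ν j :=
        ih j hj (fun i hi1 hi2 => hns i hi1 (le_trans hi2 (Nat.le_succ n)))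
      have harr : j + (n + 1) * t = j + n * t + t := by ring
      have hne1 : ν (j + n * t + t) ≠ none := by
        intro hc
        exact hns (n + 1) (Nat.succ_pos n) le_rfl (by rw [harr]; exact (hstar _).mp hc)
      have hne2 : ν (j + n * t) ≠ none := by rw [h1]; exact hj
      rw [harr, hM _ hne1 hne2, h1]
  -- solving i * t ≡ d (mod p)
  have EXIST : ∀ c j : ℕ, ((g : ℤ) ∣ (j : ℤ) - (c : ℤ)) →
      ∃ i : ℕ, (c + i * t) ≡ j [MOD p] := by
    intro c j hd
    obtain ⟨m, hm⟩ := hd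
    set z : ℤ := Nat.gcdA t p * m with hzdef
    have hpz : (0 : ℤ) < (p : ℤ) := by exact_mod_cast hp
    have hnn : 0 ≤ z % (p : ℤ) := Int.emod_nonneg z (by omega)
    set i : ℕ := (z % (p : ℤ)).toNat with hidef
    have hi : (i : ℤ) = z % (p : ℤ) := Int.toNat_of_nonneg hnn
    have hiz : (i : ℤ) ≡ z [ZMOD (p : ℤ)] := by
      rw [hi]; exact Int.emod_emod_of_dvd z dvd_rfl
    have hzt : z * t ≡ (g : ℤ) * m [ZMOD (p : ℤ)] := by
      have hh : (g : ℤ) * m - z * t = (p : ℤ) * (Nat.gcdB t p * m) := by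
        rw [hgdef]
        push_cast [Nat.gcd_eq_gcd_ab t p]
        ring
      exact Int.modEq_iff_dvd.mpr ⟨Nat.gcdB t p * m, hh⟩
    have key : ((c : ℤ) + i * t) ≡ (j : ℤ) [ZMOD (p : ℤ)] := by
      calc ((c : ℤ) + i * t) ≡ (c : ℤ) + z * t [ZMOD (p : ℤ)] :=
            Int.ModEq.add_left _ (Int.ModEq.mul_right _ hiz)
      _ ≡ (c : ℤ) + (g : ℤ) * m [ZMOD (p : ℤ)] := Int.ModEq.add_left _ hzt
      _ = (j : ℤ) := by rw [← hm]; ring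
    refine ⟨i, ?_⟩
    have : ((c + i * t : ℕ) : ℤ) ≡ ((j : ℕ) : ℤ) [ZMOD ((p : ℕ) : ℤ)] := by
      push_cast
      exact key
    exact Int.natCast_modEq_iff.mp this
  -- p ∣ x * t ↔ p' ∣ x
  have hdvdmul : ∀ x : ℕ, p ∣ x * t ↔ p' ∣ x := by
    intro x
    constructor
    · intro h
      have h1 : p' * g ∣ (x * t') * g := by
        rw [hpp']
        calc p ∣ x * t := h
        _ = (x * t') * g := by rw [mul_assoc, htt']
      have h2 : p' ∣ x * t' := (Nat.mul_dvd_mul_iff_right hg).mp h1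
      exact (Nat.Coprime.dvd_of_dvd_mul_right hco.symm h2)
    · intro h
      obtain ⟨y, hy⟩ := h
      exact ⟨y * t', by rw [hy, ← htt', ← hpp']; ring⟩
  -- base point for the star class
  set b := p - 1 + t with hbdef
  have hb1 : b + 1 = p + t := by omega
  have hbne : ν b ≠ none := by
    intro h
    have h2 := (hstar b).mp h
    rw [hb1] at h2
    exact hpt ((Nat.dvd_add_right dvd_rfl).mp h2)
  -- all non-star entries in the class of -1 mod g are equal to ν b
  have SUBJ : ∀ j, ¬ p ∣ (j + 1) → g ∣ (j + 1) → ν j = ν b := by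
    intro j hjn hjg
    have hdint : (g : ℤ) ∣ (j : ℤ) - ((p - 1 : ℕ) : ℤ) := by
      have harr : (j : ℤ) - ((p - 1 : ℕ) : ℤ) = ((j + 1 : ℕ) : ℤ) - ((p : ℕ) : ℤ) := by
        push_cast
        omega
      rw [harr]
      exact dvd_sub (Int.natCast_dvd_natCast.mpr hjg) (Int.natCast_dvd_natCast.mpr hgp)
    obtain ⟨i0, hi0⟩ := EXIST (p - 1) j hdint
    set i := i0 % p' with hidef
    obtain ⟨k, hk⟩ : ∃ k, i0 = i + p' * k :=
      ⟨i0 / p', by rw [hidef]; exact (Nat.mod_add_div i0 p').symm⟩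
    have hmulp : p ∣ (p' * k) * t := (hdvdmul (p' * k)).mpr ⟨k, rfl⟩
    obtain ⟨mm, hmm⟩ := hmulp
    have hip : (p - 1 + i * t) % p = (p - 1 + i0 * t) % p := by
      have harr : p - 1 + i0 * t = (p - 1 + i * t) + p * mm := by
        rw [hk, add_mul, ← hmm]; ring
      rw [harr, Nat.add_mul_mod_self_left]
    have hjm : (p - 1 + i * t) % p = j % p := by rw [hip]; exact hi0
    have hine : i ≠ 0 := by
      intro h0
      rw [h0] at hjm
      simp only [Nat.zero_mul, Nat.add_zero] at hjm
      have hppm : (p - 1) % p = p - 1 := Nat.mod_eq_of_lt (by omega)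
      rw [hppm] at hjm
      have hdd := Nat.mod_add_div j p
      exact hjn ⟨j / p + 1, by rw [Nat.mul_add, Nat.mul_one]; omega⟩
    have hilt : i < p' := Nat.mod_lt _ (by omega)
    obtain ⟨n, hn⟩ : ∃ n, i = n + 1 := ⟨i - 1, by omega⟩
    rw [hn] at hjm
    have hch : ν (b + n * t) = ν b := by
      apply chain n b hbne
      intro l hl0 hl1 hdvd
      have harr : b + l * t + 1 = (l + 1) * t + p := by
        rw [add_mul, one_mul]; omega
      rw [harr] at hdvd
      have h2 : p ∣ (l + 1) * t := (Nat.dvd_add_iff_left dvd_rfl).mpr hdvd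
      have h3 : p' ∣ l + 1 := (hdvdmul (l + 1)).mp h2
      have h4 : p' ≤ l + 1 := Nat.le_of_dvd (by omega) h3
      omega
    have hb2 : b + n * t = p - 1 + (n + 1) * t := by
      rw [hbdef, add_mul, one_mul]; omega
    calc ν j = ν (j % p) := hmod j
    _ = ν ((p - 1 + (n + 1) * t) % p) := by rw [hjm]
    _ = ν (p - 1 + (n + 1) * t) := (hmod _).symm
    _ = ν b := by rw [← hb2]; exact hch
  -- main equality lemma
  have ME : ∀ j1 j2 : ℕ, ¬ p ∣ (j1 + 1) → ¬ p ∣ (j2 + 1) → j1 % g = j2 % g →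
      ν j1 = ν j2 := by
    intro j1 j2 h1 h2 hmg
    by_cases hc : g ∣ (j1 + 1)
    · have hc2 : g ∣ (j2 + 1) := by
        have hmg' : (j1 + 1) % g = (j2 + 1) % g := Nat.ModEq.add_right 1 hmg
        omega
      rw [SUBJ j1 h1 hc, SUBJ j2 h2 hc2]
    · have hd : (g : ℤ) ∣ (j2 : ℤ) - (j1 : ℤ) :=
        Int.ModEq.dvd (Int.natCast_modEq_iff.mpr hmg)
      obtain ⟨i0, hi0⟩ := EXIST j1 j2 hd
      have h1ne : ν j1 ≠ none := fun h => h1 ((hstar j1).mp h)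
      have hch : ν (j1 + i0 * t) = ν j1 := by
        apply chain i0 j1 h1ne
        intro l hl0 hl1 hdvd
        have harr : j1 + l * t + 1 = l * t + (j1 + 1) := by ring
        rw [harr] at hdvd
        have hgx : g ∣ l * t + (j1 + 1) := hgp.trans hdvd
        have hlt : g ∣ l * t := Dvd.dvd.mul_left hgt l
        exact hc ((Nat.dvd_add_right hlt).mp hgx)
      calc ν j1 = ν (j1 + i0 * t) := hch.symm
      _ = ν ((j1 + i0 * t) % p) := hmod _
      _ = ν (j2 % p) := by rw [hi0]
      _ = ν j2 := (hmod _).symm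
  -- the filling symbol
  obtain ⟨e, he⟩ := Option.ne_none_iff_exists'.mp hbne
  set x : ℕ → A := fun k => (ν k).getD e with hxdef
  have hxg : ∀ k, x (k + g) = x k := by
    intro k
    have hmg : (k + g) % g = k % g := Nat.add_mod_right k g
    rcases hn1 : ν (k + g) with _ | a <;> rcases hn2 : ν k with _ | a'
    · simp [hxdef, hn1, hn2]
    · -- ν (k+g) = none, ν k = some a'
      have hpd : p ∣ (k + g + 1) := (hstar _).mp hn1
      have hgd : g ∣ (k + 1) := by
        have hh := hgp.trans hpd
        rw [show k + g + 1 = g + (k + 1) by omega] at hh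
        exact (Nat.dvd_add_right dvd_rfl).mp hh
      have h2 : ¬ p ∣ (k + 1) := fun h => by rw [(hstar k).mpr h] at hn2; exact Option.some_ne_none _ hn2.symm
      have := SUBJ k h2 hgd
      rw [hn2, he] at this
      simp [hxdef, hn1, hn2, Option.some.inj this]
    · -- ν (k+g) = some a, ν k = none
      have hpd : p ∣ (k + 1) := (hstar _).mp hn2
      have hgd : g ∣ (k + g + 1) := by
        have hh := hgp.trans hpd
        rw [show k + g + 1 = g + (k + 1) by omega]
        exact Dvd.dvd.add dvd_rfl hh
      have h1 : ¬ p ∣ (k + g + 1) := fun h => by rw [(hstar _).mpr h] at hn1; exact Option.some_ne_none _ hn1.symm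
      have := SUBJ (k + g) h1 hgd
      rw [hn1, he] at this
      simp [hxdef, hn1, hn2, Option.some.inj this]
    · have h1 : ¬ p ∣ (k + g + 1) := fun h => by rw [(hstar _).mpr h] at hn1; exact Option.some_ne_none _ hn1.symm
      have h2 : ¬ p ∣ (k + 1) := fun h => by rw [(hstar k).mpr h] at hn2; exact Option.some_ne_none _ hn2.symm
      have := ME (k + g) k h1 h2 hmg
      rw [hn1, hn2] at this
      simp [hxdef, hn1, hn2, Option.some.inj this]
  obtain ⟨q, hqex, hqg⟩ := aib_exists_exact x g hg hxg
  refine ⟨q, ⟨hqg.trans hgp, ?_, e, hqex⟩, hqg⟩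
  have : q ≤ g := Nat.le_of_dvd hg hqg
  omega

/-- If two precritical points `w⋆ν` and `w'⋆ν` of a ⋆-periodic kneading sequence ν of
period p agree at every position (⋆ a wildcard), and the difference of depths t is not
a multiple of p, then ν is a bifurcation from some period dividing gcd(t, p); in
particular if ν is not a bifurcation then the two precritical points differ somewhere. -/
theorem agree_implies_bifurcation {A : Type*} [Fintype A] (hA : 2 ≤ Fintype.card A)
    (ν : ℕ → Option A) (p : ℕ) (hp : 0 < p)
    (hper : ∀ k, ν (k + p) = ν k)
    (hstar : ∀ k, ν k = none ↔ p ∣ (k + 1))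
    (w w' : List A) (t : ℕ)
    (ht : t = max w.length w'.length - min w.length w'.length)
    (hpt : ¬ p ∣ t) :
    (Agree (pcSeq ν w) (pcSeq ν w') →
      ∃ q, IsBifurcationFrom ν p q ∧ q ∣ Nat.gcd t p) ∧
    ((¬ ∃ q, IsBifurcationFrom ν p q) → ¬ Agree (pcSeq ν w) (pcSeq ν w')) := by
  have tail : ∀ (u : List A) (j : ℕ), pcSeq ν u (j + u.length + 1) = ν j := by
    intro u j
    simp only [pcSeq]
    rw [dif_neg (by omega), if_neg (by omega)]
    congr 1
    omega
  have main : Agree (pcSeq ν w) (pcSeq ν w') →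
      ∃ q, IsBifurcationFrom ν p q ∧ q ∣ Nat.gcd t p := by
    intro hAg
    rcases le_total w.length w'.length with hle | hle
    · have hlen : w.length + t = w'.length := by
        rw [Nat.max_eq_right hle, Nat.min_eq_left hle] at ht
        omega
      have hM : ∀ j, ν (j + t) ≠ none → ν j ≠ none → ν (j + t) = ν j := by
        intro j h1 h2
        have hag := hAg (j + w'.length + 1)
        have e1 : pcSeq ν w' (j + w'.length + 1) = ν j := tail w' j
        have e2 : pcSeq ν w (j + w'.length + 1) = ν (j + t) := by
          rw [show j + w'.length + 1 = (j + t) + w.length + 1 by omega]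
          exact tail w (j + t)
        rw [e1, e2] at hag
        obtain ⟨a, ha⟩ := Option.ne_none_iff_exists'.mp h1
        obtain ⟨b, hb⟩ := Option.ne_none_iff_exists'.mp h2
        rw [ha, hb, hag a b ha hb]
      exact aib_main_aux ν p t hp hper hstar hpt hM
    · have hlen : w'.length + t = w.length := by
        rw [Nat.max_eq_left hle, Nat.min_eq_right hle] at ht
        omega
      have hM : ∀ j, ν (j + t) ≠ none → ν j ≠ none → ν (j + t) = ν j := by
        intro j h1 h2
        have hag := hAg (j + w.length + 1)
        have e1 : pcSeq ν w (j + w.length + 1) = ν j := tail w j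
        have e2 : pcSeq ν w' (j + w.length + 1) = ν (j + t) := by
          rw [show j + w.length + 1 = (j + t) + w'.length + 1 by omega]
          exact tail w' (j + t)
        rw [e1, e2] at hag
        obtain ⟨a, ha⟩ := Option.ne_none_iff_exists'.mp h1
        obtain ⟨b, hb⟩ := Option.ne_none_iff_exists'.mp h2
        rw [ha, hb, (hag b a hb ha).symm]
      exact aib_main_aux ν p t hp hper hstar hpt hM
  exact ⟨main, fun hnb hAg => hnb ((main hAg).imp (fun q h => h.1))⟩
end

section
/- Suppose g is a permutation of a finite set S of size s ≥ 2 (the local arms at a characteristic periodic point), with two distinguished (possibly equal) elements a (arm toward the critical point) and b (arm toward the critical value), such that every element of S eventually maps into {a, b} under iteration of g, i.e. every g-orbit contains a or b. Then either g acts transitively on S as a single cycle (satellite type), or g fixes a and acts transitively and cyclically on S \ {a} (evil type), or s = 2 with both elements fixed (primitive type). -/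
/-- A permutation `g` of a finite set `S` (s ≥ 2) with distinguished elements `a`
(arm toward the critical point) and `b` (arm toward the critical value) such that
`g a ∈ {a, b}` and every `g`-orbit meets `{a, b}`, is of satellite type (a single
transitive cycle), evil type (`a` fixed and `g` transitive on the complement of `a`),
or primitive type (two elements, both fixed). -/
theorem orbit_type_trichotomy {S : Type*} [Fintype S] (hS : 2 ≤ Fintype.card S)
    (g : Equiv.Perm S) (a b : S) (hga : g a = a ∨ g a = b)
    (horb : ∀ x : S, ∃ n : ℕ, (⇑g)^[n] x = a ∨ (⇑g)^[n] x = b) :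
    (∀ x y : S, ∃ n : ℕ, (⇑g)^[n] x = y) ∨
    (g a = a ∧ ∀ x : S, x ≠ a → ∀ y : S, y ≠ a → ∃ n : ℕ, (⇑g)^[n] x = y) ∨
    (Fintype.card S = 2 ∧ ∀ x : S, g x = x) := by
  classical
  have hord : 1 ≤ orderOf g := orderOf_pos g
  have hid : ∀ (n : ℕ) (x : S), (⇑g)^[n * orderOf g] x = x := by
    intro n x
    have : (⇑g)^[n * orderOf g] = ⇑(g ^ (n * orderOf g)) := (Equiv.Perm.coe_pow g _).symm
    rw [this, mul_comm, pow_mul, pow_orderOf_eq_one, one_pow]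
    rfl
  have hsym : ∀ x y : S, (∃ n, (⇑g)^[n] x = y) → ∃ m, (⇑g)^[m] y = x := by
    rintro x y ⟨n, rfl⟩
    refine ⟨n * (orderOf g - 1), ?_⟩
    rw [← Function.iterate_add_apply]
    have h : n * (orderOf g - 1) + n = orderOf g * n := by
      obtain ⟨k, hk⟩ := Nat.exists_eq_add_of_le hord
      rw [hk]
      rw [Nat.add_sub_cancel_left]
      ring
    rw [h, mul_comm, hid]
  have htrans : ∀ x y z : S, (∃ n, (⇑g)^[n] x = y) → (∃ n, (⇑g)^[n] y = z) →
      ∃ n, (⇑g)^[n] x = z := by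
    rintro x y z ⟨n, rfl⟩ ⟨m, rfl⟩
    exact ⟨m + n, (Function.iterate_add_apply _ m n x)⟩
  -- Evil case: g a = a
  have evil : g a = a → (g a = a ∧ ∀ x : S, x ≠ a → ∀ y : S, y ≠ a →
      ∃ n : ℕ, (⇑g)^[n] x = y) := by
    intro hfix
    have hfixn : ∀ n : ℕ, (⇑g)^[n] a = a := fun n => Function.iterate_fixed hfix n
    have hreachb : ∀ x : S, x ≠ a → ∃ n, (⇑g)^[n] x = b := by
      intro x hx
      obtain ⟨n, hn | hn⟩ := horb x
      · exfalso
        obtain ⟨m, hm⟩ := hsym x a ⟨n, hn⟩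
        rw [hfixn] at hm
        exact hx hm.symm
      · exact ⟨n, hn⟩
    refine ⟨hfix, fun x hx y hy => ?_⟩
    exact htrans x b y (hreachb x hx) (hsym y b (hreachb y hy))
  rcases hga with hfix | hab
  · exact Or.inr (Or.inl (evil hfix))
  · by_cases hab' : a = b
    · exact Or.inr (Or.inl (evil (hab.trans hab'.symm)))
    · -- Satellite: g a = b, a ≠ b, single cycle
      left
      have hba : ∃ n, (⇑g)^[n] b = a := hsym a b ⟨1, hab⟩
      have hxa : ∀ x : S, ∃ n, (⇑g)^[n] x = a := by
        intro x
        obtain ⟨n, hn | hn⟩ := horb x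
        · exact ⟨n, hn⟩
        · exact htrans x b a ⟨n, hn⟩ hba
      intro x y
      exact htrans x a y (hxa x) (hsym y a (hxa y))
end

section
/- Let T be a compact tree that is a finite union of arcs whose endpoints all lie in a finite set E, and let f : T → T be continuous with the property that a point x with f(x) an endpoint of T must be an endpoint or equal to c. If the critical value v = f(c) is not an endpoint of T, then no point of the forward orbit of v is an endpoint of T — contradicting the fact that T (being a finite union of arcs bounded by postcritical points) must have endpoints on the orbit of v. Hence in a finite Hubbard tree the critical value is an endpoint. -/
/-- `A` is an arc in `T` from `a` to `b`. -/
def ArcBetween {T : Type*} [TopologicalSpace T] (a b : T) (A : Set T) : Prop :=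
  ∃ g : Set.Icc (0 : ℝ) 1 → T, Continuous g ∧ Function.Injective g ∧
    Set.range g = A ∧ g ⟨0, by norm_num⟩ = a ∧ g ⟨1, by norm_num⟩ = b

/-- `x` is an endpoint of `T`: the complement of `{x}` is connected. -/
def IsEndpoint {T : Type*} [TopologicalSpace T] (x : T) : Prop :=
  IsPreconnected ({x}ᶜ : Set T)

section ArcLemmas

variable {T : Type*} [TopologicalSpace T]

lemma arc_ne {a b : T} {A : Set T} (h : ArcBetween a b A) : a ≠ b := by
  obtain ⟨g, _, gi, _, g0, g1⟩ := h
  intro e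
  have h01 : (⟨0, by norm_num⟩ : Set.Icc (0:ℝ) 1) = ⟨1, by norm_num⟩ :=
    gi (by rw [g0, g1, e])
  have := congrArg Subtype.val h01
  norm_num at this

lemma arc_mem_left {a b : T} {A : Set T} (h : ArcBetween a b A) : a ∈ A := by
  obtain ⟨g, _, _, gr, g0, _⟩ := h
  rw [← gr, ← g0]; exact ⟨_, rfl⟩

lemma arc_mem_right {a b : T} {A : Set T} (h : ArcBetween a b A) : b ∈ A := by
  obtain ⟨g, _, _, gr, _, g1⟩ := h
  rw [← gr, ← g1]; exact ⟨_, rfl⟩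

lemma arc_symm {a b : T} {A : Set T} (h : ArcBetween a b A) : ArcBetween b a A := by
  obtain ⟨g, hc, hi, hr, h0, h1⟩ := h
  have key : ∀ (x y : Set.Icc (0:ℝ) 1), (x:ℝ) = (y:ℝ) → g x = g y :=
    fun x y h => congrArg g (Subtype.ext h)
  have hmem : ∀ u : Set.Icc (0:ℝ) 1, 1 - (u:ℝ) ∈ Set.Icc (0:ℝ) 1 :=
    fun u => ⟨by linarith [u.2.2], by linarith [u.2.1]⟩
  refine ⟨fun u => g ⟨1 - u, hmem u⟩, hc.comp (Continuous.subtype_mk (by fun_prop) _), ?_, ?_, ?_, ?_⟩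
  · intro u v huv
    have := congrArg Subtype.val (hi huv)
    simp only at this
    exact Subtype.ext (by linarith)
  · rw [← hr]
    ext w
    constructor
    · rintro ⟨u, rfl⟩; exact ⟨_, rfl⟩
    · rintro ⟨u, rfl⟩
      exact ⟨⟨1 - u, hmem u⟩, key _ _ (by simp)⟩
  · exact (key _ _ (by norm_num)).trans h1
  · exact (key _ _ (by norm_num)).trans h0

lemma arc_subarc {g : Set.Icc (0:ℝ) 1 → T}
    (hc : Continuous g) (hi : Function.Injective g) {s t : Set.Icc (0:ℝ) 1}
    (hst : (s:ℝ) < (t:ℝ)) :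
    ArcBetween (g s) (g t) (g '' {u : Set.Icc (0:ℝ) 1 | (s:ℝ) ≤ (u:ℝ) ∧ (u:ℝ) ≤ (t:ℝ)}) := by
  have key : ∀ (x y : Set.Icc (0:ℝ) 1), (x:ℝ) = (y:ℝ) → g x = g y :=
    fun x y h => congrArg g (Subtype.ext h)
  have hs0 : (0:ℝ) ≤ s := s.2.1
  have ht1 : (t:ℝ) ≤ 1 := t.2.2
  have hts : (0:ℝ) < (t:ℝ) - s := by linarith
  have hmem : ∀ u : Set.Icc (0:ℝ) 1, (s:ℝ) + u * ((t:ℝ) - s) ∈ Set.Icc (0:ℝ) 1 := by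
    intro u
    have h0 : (0:ℝ) ≤ u := u.2.1
    have h1 : (u:ℝ) ≤ 1 := u.2.2
    constructor
    · nlinarith
    · nlinarith
  refine ⟨fun u => g ⟨(s:ℝ) + u * ((t:ℝ) - s), hmem u⟩,
    hc.comp (Continuous.subtype_mk (by fun_prop) _), ?_, ?_, ?_, ?_⟩
  · intro u v huv
    have h2 := congrArg Subtype.val (hi huv)
    simp only at h2
    have h3 : (u:ℝ) * ((t:ℝ) - s) = (v:ℝ) * ((t:ℝ) - s) := by linarith
    exact Subtype.ext (mul_right_cancel₀ (ne_of_gt hts) h3)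
  · ext w
    constructor
    · rintro ⟨u, rfl⟩
      refine ⟨⟨(s:ℝ) + u * ((t:ℝ) - s), hmem u⟩, ⟨?_, ?_⟩, rfl⟩
      · show (s:ℝ) ≤ (s:ℝ) + u * ((t:ℝ) - s)
        have h0 : (0:ℝ) ≤ u := u.2.1
        nlinarith
      · show (s:ℝ) + u * ((t:ℝ) - s) ≤ (t:ℝ)
        have h1 : (u:ℝ) ≤ 1 := u.2.2
        nlinarith
    · rintro ⟨v, ⟨hv1, hv2⟩, rfl⟩
      refine ⟨⟨((v:ℝ) - s)/((t:ℝ) - s), ⟨div_nonneg (by linarith) hts.le, ?_⟩⟩, ?_⟩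
      · rw [div_le_one hts]; linarith
      · exact key _ _ (by field_simp; ring)
  · exact key _ _ (by push_cast; ring)
  · exact key _ _ (by push_cast; ring)

lemma arc_concat {a x b : T} {A1 A2 : Set T}
    (h1 : ArcBetween a x A1) (h2 : ArcBetween x b A2) (h12 : A1 ∩ A2 = {x}) :
    ArcBetween a b (A1 ∪ A2) := by
  classical
  obtain ⟨g1, c1, i1, r1, s1, t1⟩ := h1
  obtain ⟨g2, c2, i2, r2, s2, t2⟩ := h2
  set pr : ℝ → Set.Icc (0:ℝ) 1 := Set.projIcc 0 1 zero_le_one with hpr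
  have hprmem : ∀ (y : ℝ) (hy : y ∈ Set.Icc (0:ℝ) 1), pr y = ⟨y, hy⟩ :=
    fun y hy => Set.projIcc_of_mem zero_le_one hy
  have hmem1 : ∀ u : Set.Icc (0:ℝ) 1, (u:ℝ) ≤ 1/2 → 2*(u:ℝ) ∈ Set.Icc (0:ℝ) 1 :=
    fun u hu => ⟨by linarith [u.2.1], by linarith⟩
  have hmem2 : ∀ u : Set.Icc (0:ℝ) 1, ¬(u:ℝ) ≤ 1/2 → 2*(u:ℝ) - 1 ∈ Set.Icc (0:ℝ) 1 :=
    fun u hu => ⟨by push_neg at hu; linarith, by linarith [u.2.2]⟩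
  refine ⟨fun u => if (u:ℝ) ≤ 1/2 then g1 (pr (2*u)) else g2 (pr (2*u - 1)), ?_, ?_, ?_, ?_, ?_⟩
  · apply Continuous.if_le
    · exact c1.comp (continuous_projIcc.comp (by fun_prop))
    · exact c2.comp (continuous_projIcc.comp (by fun_prop))
    · exact continuous_subtype_val
    · exact continuous_const
    · intro u hu
      have e1 : pr (2*(u:ℝ)) = ⟨1, by norm_num⟩ := by
        rw [hu]; norm_num
        exact hprmem 1 (by norm_num)
      have e2 : pr (2*(u:ℝ) - 1) = ⟨0, by norm_num⟩ := by
        rw [hu]; norm_num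
        exact hprmem 0 (by norm_num)
      rw [e1, e2, t1, s2]
  · intro u v huv
    simp only at huv
    by_cases hu : (u:ℝ) ≤ 1/2 <;> by_cases hv : (v:ℝ) ≤ 1/2
    · rw [if_pos hu, if_pos hv, hprmem _ (hmem1 u hu), hprmem _ (hmem1 v hv)] at huv
      have := congrArg Subtype.val (i1 huv)
      simp only at this
      exact Subtype.ext (by linarith)
    · rw [if_pos hu, if_neg hv, hprmem _ (hmem1 u hu), hprmem _ (hmem2 v hv)] at huv
      exfalso
      have hval : g1 ⟨2*(u:ℝ), hmem1 u hu⟩ ∈ A1 ∩ A2 := by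
        constructor
        · rw [← r1]; exact ⟨_, rfl⟩
        · rw [huv, ← r2]; exact ⟨_, rfl⟩
      rw [h12] at hval
      have hxg1 : g1 ⟨2*(u:ℝ), hmem1 u hu⟩ = g1 ⟨1, by norm_num⟩ := by
        rw [t1]; exact hval
      have hu1 : 2*(u:ℝ) = 1 := congrArg Subtype.val (i1 hxg1)
      have hxg2 : g2 ⟨2*(v:ℝ) - 1, hmem2 v hv⟩ = g2 ⟨0, by norm_num⟩ := by
        rw [s2, ← huv]; exact hval
      have hv0 : 2*(v:ℝ) - 1 = 0 := congrArg Subtype.val (i2 hxg2)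
      push_neg at hv
      linarith
    · rw [if_neg hu, if_pos hv, hprmem _ (hmem2 u hu), hprmem _ (hmem1 v hv)] at huv
      exfalso
      have hval : g1 ⟨2*(v:ℝ), hmem1 v hv⟩ ∈ A1 ∩ A2 := by
        constructor
        · rw [← r1]; exact ⟨_, rfl⟩
        · rw [← huv, ← r2]; exact ⟨_, rfl⟩
      rw [h12] at hval
      have hxg1 : g1 ⟨2*(v:ℝ), hmem1 v hv⟩ = g1 ⟨1, by norm_num⟩ := by
        rw [t1]; exact hval
      have hv1 : 2*(v:ℝ) = 1 := congrArg Subtype.val (i1 hxg1)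
      have hxg2 : g2 ⟨2*(u:ℝ) - 1, hmem2 u hu⟩ = g2 ⟨0, by norm_num⟩ := by
        rw [s2, huv]; exact hval
      have hu0 : 2*(u:ℝ) - 1 = 0 := congrArg Subtype.val (i2 hxg2)
      push_neg at hu
      linarith
    · rw [if_neg hu, if_neg hv, hprmem _ (hmem2 u hu), hprmem _ (hmem2 v hv)] at huv
      have := congrArg Subtype.val (i2 huv)
      simp only at this
      exact Subtype.ext (by linarith)
  · ext w
    simp only [Set.mem_range, Set.mem_union]
    constructor
    · rintro ⟨u, rfl⟩
      by_cases hu : (u:ℝ) ≤ 1/2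
      · left; rw [if_pos hu, ← r1]; exact ⟨_, rfl⟩
      · right; rw [if_neg hu, ← r2]; exact ⟨_, rfl⟩
    · rintro (hw | hw)
      · rw [← r1] at hw
        obtain ⟨v, rfl⟩ := hw
        have hv2 : ((v:ℝ)/2) ∈ Set.Icc (0:ℝ) 1 := ⟨by linarith [v.2.1], by linarith [v.2.2]⟩
        refine ⟨⟨(v:ℝ)/2, hv2⟩, ?_⟩
        have hle : (((⟨(v:ℝ)/2, hv2⟩ : Set.Icc (0:ℝ) 1)):ℝ) ≤ 1/2 := by
          show (v:ℝ)/2 ≤ 1/2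
          linarith [v.2.2]
        rw [if_pos hle]
        congr 1
        rw [hprmem _ (by constructor <;> [linarith [v.2.1]; linarith [v.2.2]] : 2*((v:ℝ)/2) ∈ Set.Icc (0:ℝ) 1)]
        exact Subtype.ext (by ring)
      · rw [← r2] at hw
        obtain ⟨v, rfl⟩ := hw
        by_cases hv0 : (v:ℝ) = 0
        · refine ⟨⟨1/2, by norm_num⟩, ?_⟩
          rw [if_pos (by norm_num)]
          have : pr (2*((1:ℝ)/2)) = ⟨1, by norm_num⟩ := by
            norm_num; exact hprmem 1 (by norm_num)
          rw [this, t1, show v = (⟨0, by norm_num⟩ : Set.Icc (0:ℝ) 1) from Subtype.ext hv0, s2]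
        · have hv2 : ((v:ℝ)+1)/2 ∈ Set.Icc (0:ℝ) 1 := ⟨by linarith [v.2.1], by linarith [v.2.2]⟩
          refine ⟨⟨((v:ℝ)+1)/2, hv2⟩, ?_⟩
          have hgt : ¬(((⟨((v:ℝ)+1)/2, hv2⟩ : Set.Icc (0:ℝ) 1)):ℝ) ≤ 1/2 := by
            show ¬((v:ℝ)+1)/2 ≤ 1/2
            have : (0:ℝ) < v := lt_of_le_of_ne v.2.1 (Ne.symm hv0)
            push_neg
            linarith
          rw [if_neg hgt]
          congr 1
          rw [hprmem _ (by constructor <;> [linarith [v.2.1]; linarith [v.2.2]] : 2*(((v:ℝ)+1)/2) - 1 ∈ Set.Icc (0:ℝ) 1)]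
          exact Subtype.ext (by ring)
  · beta_reduce
    rw [if_pos (by norm_num : ((⟨0, by norm_num⟩ : Set.Icc (0:ℝ) 1):ℝ) ≤ 1/2)]
    have : pr (2*((⟨0, by norm_num⟩ : Set.Icc (0:ℝ) 1):ℝ)) = ⟨0, by norm_num⟩ := by
      norm_num; exact hprmem 0 (by norm_num)
    rw [this, s1]
  · beta_reduce
    rw [if_neg (by norm_num : ¬((⟨1, by norm_num⟩ : Set.Icc (0:ℝ) 1):ℝ) ≤ 1/2)]
    have : pr (2*((⟨1, by norm_num⟩ : Set.Icc (0:ℝ) 1):ℝ) - 1) = ⟨1, by norm_num⟩ := by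
      norm_num; exact hprmem 1 (by norm_num)
    rw [this, t2]

/-- If `B` is an arc from `r` to `q`, `z ∈ B`, `z ≠ q`, and `A` is an arc from `r`
to `z`, then (by uniqueness) `A` is the initial segment of `B`, so `A ⊆ B` and `q ∉ A`. -/
lemma arc_initial (htree : ∀ a b : T, a ≠ b → ∃! A : Set T, ArcBetween a b A)
    {r z q : T} {A B : Set T} (hA : ArcBetween r z A) (hB : ArcBetween r q B)
    (hzB : z ∈ B) (hzq : z ≠ q) : A ⊆ B ∧ q ∉ A := by
  have hrz : r ≠ z := arc_ne hA
  obtain ⟨h, hc, hi, hr, h0, h1⟩ := hB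
  rw [← hr] at hzB
  obtain ⟨t, ht⟩ := hzB
  have ht1 : (t:ℝ) ≠ 1 := by
    intro e
    apply hzq
    rw [← ht, ← h1]
    exact congrArg h (Subtype.ext e)
  have ht0 : (0:ℝ) < (t:ℝ) :=
    lt_of_le_of_ne t.2.1 (fun e => hrz (by rw [← ht, ← h0]; exact congrArg h (Subtype.ext e)))
  have hsub := arc_subarc hc hi (s := ⟨0, by norm_num⟩) (t := t) ht0
  have h00 : h ⟨0, by norm_num⟩ = r := h0
  rw [h00, ht] at hsub
  have huniq := htree r z hrz
  have hAeq : A = h '' {u : Set.Icc (0:ℝ) 1 | ((⟨0, by norm_num⟩ : Set.Icc (0:ℝ) 1):ℝ) ≤ (u:ℝ) ∧ (u:ℝ) ≤ (t:ℝ)} :=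
    huniq.unique hA hsub
  constructor
  · rw [hAeq, ← hr]
    exact Set.image_subset_range _ _
  · rw [hAeq]
    rintro ⟨w, ⟨-, hw2⟩, hwq⟩
    have : w = ⟨1, by norm_num⟩ := hi (by rw [hwq, h1])
    rw [this] at hw2
    simp only at hw2
    have ht1' : (t:ℝ) ≤ 1 := t.2.2
    exact ht1 (le_antisymm ht1' hw2)

/-- Dichotomy: if `X` is an arc ending at `z`, and `C1`, `C2` are arcs ending/starting
at `z` with `C1 ∩ C2 = {z}`, then `X ∩ C1 = {z}` or `X ∩ C2 = {z}`. -/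
lemma arc_dichotomy (htree : ∀ a b : T, a ≠ b → ∃! A : Set T, ArcBetween a b A)
    {r' z y1 y2 : T} {X C1 C2 : Set T}
    (hX : ArcBetween r' z X) (hC1 : ArcBetween y1 z C1) (hC2 : ArcBetween z y2 C2)
    (hC : C1 ∩ C2 = {z}) : X ∩ C1 = {z} ∨ X ∩ C2 = {z} := by
  by_contra hcon
  push_neg at hcon
  obtain ⟨hn1, hn2⟩ := hcon
  have hzX : z ∈ X := arc_mem_right hX
  have hzC1 : z ∈ C1 := arc_mem_right hC1
  have hzC2 : z ∈ C2 := arc_mem_left hC2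
  have hex1 : ∃ u ∈ X ∩ C1, u ≠ z := by
    by_contra hno
    push_neg at hno
    exact hn1 (Set.eq_singleton_iff_unique_mem.mpr ⟨⟨hzX, hzC1⟩, hno⟩)
  have hex2 : ∃ w ∈ X ∩ C2, w ≠ z := by
    by_contra hno
    push_neg at hno
    exact hn2 (Set.eq_singleton_iff_unique_mem.mpr ⟨⟨hzX, hzC2⟩, hno⟩)
  obtain ⟨up, ⟨hupX, hupC1⟩, hupz⟩ := hex1
  obtain ⟨wp, ⟨hwpX, hwpC2⟩, hwpz⟩ := hex2
  have huw : up ≠ wp := by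
    intro e
    apply hupz
    have : up ∈ C1 ∩ C2 := ⟨hupC1, e ▸ hwpC2⟩
    rwa [hC] at this
  obtain ⟨k1, kc1, ki1, kr1, ks1, kt1⟩ := hC1
  obtain ⟨k2, kc2, ki2, kr2, ks2, kt2⟩ := hC2
  rw [← kr1] at hupC1
  obtain ⟨σ, hσ⟩ := hupC1
  rw [← kr2] at hwpC2
  obtain ⟨τ, hτ⟩ := hwpC2
  have hσ1 : (σ:ℝ) < 1 :=
    lt_of_le_of_ne σ.2.2 (fun e => hupz (by rw [← hσ, ← kt1]; exact congrArg k1 (Subtype.ext e)))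
  have hτ0 : (0:ℝ) < (τ:ℝ) :=
    lt_of_le_of_ne τ.2.1 (fun e => hwpz (by rw [← hτ, ← ks2]; exact congrArg k2 (Subtype.ext e.symm)))
  have hD1 := arc_subarc kc1 ki1 (s := σ) (t := ⟨1, by norm_num⟩) hσ1
  rw [hσ, kt1] at hD1
  have hD2 := arc_subarc kc2 ki2 (s := ⟨0, by norm_num⟩) (t := τ) hτ0
  rw [hτ, ks2] at hD2
  set D1 := k1 '' {u : Set.Icc (0:ℝ) 1 | (σ:ℝ) ≤ (u:ℝ) ∧ (u:ℝ) ≤ ((⟨1, by norm_num⟩ : Set.Icc (0:ℝ) 1):ℝ)} with hD1def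
  set D2 := k2 '' {u : Set.Icc (0:ℝ) 1 | ((⟨0, by norm_num⟩ : Set.Icc (0:ℝ) 1):ℝ) ≤ (u:ℝ) ∧ (u:ℝ) ≤ (τ:ℝ)} with hD2def
  have hzD1 : z ∈ D1 := arc_mem_right hD1
  have hzD2 : z ∈ D2 := arc_mem_left hD2
  have hD12 : D1 ∩ D2 = {z} := by
    apply Set.eq_singleton_iff_unique_mem.mpr
    refine ⟨⟨hzD1, hzD2⟩, ?_⟩
    intro w hw
    have : w ∈ C1 ∩ C2 := ⟨by rw [← kr1]; exact Set.image_subset_range _ _ hw.1,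
      by rw [← kr2]; exact Set.image_subset_range _ _ hw.2⟩
    rwa [hC] at this
  have harc2 : ArcBetween up wp (D1 ∪ D2) := arc_concat hD1 hD2 hD12
  have hzarc2 : z ∈ D1 ∪ D2 := Or.inl hzD1
  obtain ⟨g, gc, gi, gr, g0, g1⟩ := hX
  rw [← gr] at hupX hwpX
  obtain ⟨su, hsu⟩ := hupX
  obtain ⟨sw, hsw⟩ := hwpX
  have hsu1 : (su:ℝ) < 1 :=
    lt_of_le_of_ne su.2.2 (fun e => hupz (by rw [← hsu, ← g1]; exact congrArg g (Subtype.ext e)))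
  have hsw1 : (sw:ℝ) < 1 :=
    lt_of_le_of_ne sw.2.2 (fun e => hwpz (by rw [← hsw, ← g1]; exact congrArg g (Subtype.ext e)))
  have hsusw : su ≠ sw := fun e => huw (by rw [← hsu, ← hsw, e])
  have key : ∃ S1 : Set T, ArcBetween up wp S1 ∧ z ∉ S1 := by
    rcases lt_or_gt_of_ne (fun e : (su:ℝ) = (sw:ℝ) => hsusw (Subtype.ext e)) with hlt | hgt
    · refine ⟨_, by rw [← hsu, ← hsw]; exact arc_subarc gc gi hlt, ?_⟩
      rintro ⟨w, ⟨-, hw2⟩, hwz⟩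
      have : w = ⟨1, by norm_num⟩ := gi (by rw [hwz, g1])
      rw [this] at hw2
      simp only at hw2
      linarith
    · refine ⟨_, arc_symm (by rw [← hsu, ← hsw]; exact arc_subarc gc gi hgt), ?_⟩
      rintro ⟨w, ⟨-, hw2⟩, hwz⟩
      have : w = ⟨1, by norm_num⟩ := gi (by rw [hwz, g1])
      rw [this] at hw2
      simp only at hw2
      linarith
  obtain ⟨S1, hS1, hzS1⟩ := key
  have := (htree up wp huw).unique hS1 harc2
  rw [this] at hzS1
  exact hzS1 hzarc2

end ArcLemmas

lemma exists_maximal_rel {α : Type*} {R : α → α → Prop}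
    (htrans : ∀ a b c, R a b → R b c → R a c) (hirr : ∀ a, ¬ R a a) :
    ∀ s : Finset α, s.Nonempty → ∃ p ∈ s, ∀ q ∈ s, ¬ R p q := by
  classical
  intro s
  induction s using Finset.induction_on with
  | empty => intro h; exact absurd h (by simp)
  | @insert a s ha ih =>
    intro _
    by_cases hs : s.Nonempty
    · obtain ⟨p, hp, hpm⟩ := ih hs
      by_cases hpa : R p a
      · refine ⟨a, Finset.mem_insert_self _ _, ?_⟩
        intro q hq
        rcases Finset.mem_insert.mp hq with rfl | hq
        · exact hirr q
        · exact fun h => hpm q hq (htrans _ _ _ hpa h)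
      · refine ⟨p, Finset.mem_insert_of_mem hp, ?_⟩
        intro q hq
        rcases Finset.mem_insert.mp hq with rfl | hq
        · exact hpa
        · exact hpm q hq
    · rw [Finset.not_nonempty_iff_eq_empty.mp hs]
      exact ⟨a, Finset.mem_insert_self _ _, by
        intro q hq
        rcases Finset.mem_insert.mp hq with rfl | hq
        · exact hirr q
        · simp at hq⟩

/-- In a compact finite tree (a finite union of arcs bounded by postcritical points,
with arc endpoints in a finite set E), with f continuous, injective on connected
subsets avoiding c, such that non-endpoints other than c map to non-endpoints, and
all endpoints postcritical, the critical value v = f c is an endpoint. -/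
theorem critical_value_endpoint {T : Type*} [TopologicalSpace T] [CompactSpace T]
    (htree : ∀ a b : T, a ≠ b → ∃! A : Set T, ArcBetween a b A)
    (f : T → T) (c : T) (hf : Continuous f)
    (hinj : ∀ S : Set T, IsConnected S → c ∉ S → Set.InjOn f S)
    (hne : ∀ x : T, ¬ IsEndpoint x → x ≠ c → ¬ IsEndpoint (f x))
    (E : Finset T)
    (harcs : ∃ (n : ℕ) (u : Fin n → Set T) (a b : Fin n → T),
      (∀ i, ArcBetween (a i) (b i) (u i)) ∧ (⋃ i, u i) = Set.univ ∧
      (∀ i, a i ∈ E ∧ b i ∈ E) ∧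
      (∀ i, (∃ m : ℕ, f^[m] (f c) = a i) ∧ (∃ m : ℕ, f^[m] (f c) = b i)))
    (hend : ∀ x : T, IsEndpoint x → ∃ m : ℕ, f^[m] (f c) = x) :
    IsEndpoint (f c) := by
  classical
  by_contra hv
  -- All points of the forward orbit of `f c` are non-endpoints.
  have noorb : ∀ m : ℕ, ¬ IsEndpoint (f^[m] (f c)) := by
    intro m
    induction m with
    | zero => simpa using hv
    | succ m ih =>
      by_cases hc' : f^[m] (f c) = c
      · rw [Function.iterate_succ_apply', hc']; exact hv
      · rw [Function.iterate_succ_apply']; exact hne _ ih hc'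
  -- Hence there are no endpoints at all.
  have henone : ∀ x : T, ¬ IsEndpoint x := fun x hx => by
    obtain ⟨m, hm⟩ := hend x hx
    exact noorb m (hm ▸ hx)
  -- Now derive a contradiction: the tree must have an endpoint.
  obtain ⟨n, u, va, vb, harc, hcov, hEmem, horb⟩ := harcs
  have hcu : c ∈ ⋃ i, u i := by rw [hcov]; trivial
  obtain ⟨i0, hi0⟩ : ∃ i, c ∈ u i := by simpa using hcu
  set r : T := va i0 with hrdef
  -- The strict order "p lies strictly before q on the arc from r to q".
  have htransR : ∀ p q s : T,
      (p ≠ q ∧ ∃ A : Set T, ArcBetween r q A ∧ p ∈ A) →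
      (q ≠ s ∧ ∃ A : Set T, ArcBetween r s A ∧ q ∈ A) →
      (p ≠ s ∧ ∃ A : Set T, ArcBetween r s A ∧ p ∈ A) := by
    rintro p q s ⟨hpq, Aq, hAq, hpAq⟩ ⟨hqs, As, hAs, hqAs⟩
    obtain ⟨hsub, hnot⟩ := arc_initial htree hAq hAs hqAs hqs
    exact ⟨fun e => hnot (e ▸ hpAq), As, hAs, hsub hpAq⟩
  have hirrR : ∀ p : T, ¬ (p ≠ p ∧ ∃ A : Set T, ArcBetween r p A ∧ p ∈ A) :=
    fun p h => h.1 rfl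
  -- The finite set of arc endpoints.
  set P : Finset T := (Finset.image va Finset.univ) ∪ (Finset.image vb Finset.univ) with hPdef
  have hvaP : ∀ i, va i ∈ P :=
    fun i => Finset.mem_union_left _ (Finset.mem_image.mpr ⟨i, Finset.mem_univ i, rfl⟩)
  have hvbP : ∀ i, vb i ∈ P :=
    fun i => Finset.mem_union_right _ (Finset.mem_image.mpr ⟨i, Finset.mem_univ i, rfl⟩)
  obtain ⟨p, hpP, hpmax⟩ :=
    exists_maximal_rel (R := fun p q => p ≠ q ∧ ∃ A : Set T, ArcBetween r q A ∧ p ∈ A)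
      htransR hirrR P ⟨va i0, hvaP i0⟩
  -- p is not the root.
  have hrvb : r ≠ vb i0 := by rw [hrdef]; exact arc_ne (harc i0)
  have hpr : p ≠ r := by
    intro e
    apply hpmax (vb i0) (hvbP i0)
    refine ⟨e ▸ hrvb, u i0, ?_, ?_⟩
    · rw [hrdef]; exact harc i0
    · rw [e, hrdef]; exact arc_mem_left (harc i0)
  -- Main step: p cannot lie on any arc starting at r and ending elsewhere.
  have hmain : ∀ (z : T) (A : Set T), ArcBetween r z A → p ∈ A → p ≠ z → False := by
    intro z A hA hpA hpz
    have hz : z ∈ ⋃ i, u i := by rw [hcov]; trivial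
    obtain ⟨i, hzi⟩ : ∃ i, z ∈ u i := by simpa using hz
    by_cases hza : z = va i
    · exact hpmax (va i) (hvaP i)
        ⟨by rw [← hza]; exact hpz, A, by rw [← hza]; exact hA, hpA⟩
    by_cases hzb : z = vb i
    · exact hpmax (vb i) (hvbP i)
        ⟨by rw [← hzb]; exact hpz, A, by rw [← hzb]; exact hA, hpA⟩
    -- z is interior to the arc u i: split it at z.
    obtain ⟨G, Gc, Gi, Gr, G0, G1⟩ := harc i
    rw [← Gr] at hzi
    obtain ⟨m, hm⟩ := hzi
    have hm0 : (0:ℝ) < (m:ℝ) :=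
      lt_of_le_of_ne m.2.1 (fun e => hza (by rw [← hm, ← G0]; exact congrArg G (Subtype.ext e.symm)))
    have hm1 : (m:ℝ) < 1 :=
      lt_of_le_of_ne m.2.2 (fun e => hzb (by rw [← hm, ← G1]; exact congrArg G (Subtype.ext e)))
    have hC1 := arc_subarc Gc Gi (s := ⟨0, by norm_num⟩) (t := m) hm0
    rw [hm, G0] at hC1
    have hC2 := arc_subarc Gc Gi (s := m) (t := ⟨1, by norm_num⟩) hm1
    rw [hm, G1] at hC2
    set C1 := G '' {w : Set.Icc (0:ℝ) 1 | ((⟨0, by norm_num⟩ : Set.Icc (0:ℝ) 1):ℝ) ≤ (w:ℝ) ∧ (w:ℝ) ≤ (m:ℝ)} with hC1def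
    set C2 := G '' {w : Set.Icc (0:ℝ) 1 | (m:ℝ) ≤ (w:ℝ) ∧ (w:ℝ) ≤ ((⟨1, by norm_num⟩ : Set.Icc (0:ℝ) 1):ℝ)} with hC2def
    have hC12 : C1 ∩ C2 = {z} := by
      apply Set.eq_singleton_iff_unique_mem.mpr
      refine ⟨⟨arc_mem_right hC1, arc_mem_left hC2⟩, ?_⟩
      rintro w ⟨⟨x1, ⟨-, hx1b⟩, hx1⟩, ⟨x2, ⟨hx2a, -⟩, hx2⟩⟩
      have hx12 : x1 = x2 := Gi (by rw [hx1, hx2])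
      have : (x1:ℝ) = m := le_antisymm hx1b (by rw [hx12]; exact hx2a)
      rw [← hm, ← hx1]
      exact congrArg G (Subtype.ext this)
    rcases arc_dichotomy htree hA hC1 hC2 hC12 with hd | hd
    · -- A ∩ C1 = {z} : extend A past z to (va i)
      have hB : ArcBetween r (va i) (A ∪ C1) := arc_concat hA (arc_symm hC1) hd
      have hpne : p ≠ va i := by
        intro e
        exact (arc_initial htree hA hB (Or.inl (arc_mem_right hA)) hza).2 (e ▸ hpA)
      exact hpmax (va i) (hvaP i) ⟨hpne, A ∪ C1, hB, Or.inl hpA⟩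
    · -- A ∩ C2 = {z} : extend A past z to (vb i)
      have hB : ArcBetween r (vb i) (A ∪ C2) := arc_concat hA hC2 hd
      have hpne : p ≠ vb i := by
        intro e
        exact (arc_initial htree hA hB (Or.inl (arc_mem_right hA)) hzb).2 (e ▸ hpA)
      exact hpmax (vb i) (hvbP i) ⟨hpne, A ∪ C2, hB, Or.inl hpA⟩
  -- Therefore p is an endpoint: its complement is path-connected.
  have hpend : IsEndpoint p := by
    have hrpc : r ∈ ({p}ᶜ : Set T) := by
      simp only [Set.mem_compl_iff, Set.mem_singleton_iff]
      exact Ne.symm hpr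
    have hpc : IsPathConnected ({p}ᶜ : Set T) := by
      refine ⟨r, hrpc, ?_⟩
      intro y hy
      have hyp : y ≠ p := by simpa using hy
      by_cases hyr : y = r
      · rw [hyr]; exact JoinedIn.refl hrpc
      · obtain ⟨A, hA, -⟩ := htree r y (Ne.symm hyr)
        have hpA : p ∉ A := fun hpA => hmain y A hA hpA (Ne.symm hyp)
        obtain ⟨g, gc, gi, gr, g0, g1⟩ := hA
        refine ⟨⟨⟨g, gc⟩, g0, g1⟩, ?_⟩
        intro t
        simp only [Set.mem_compl_iff, Set.mem_singleton_iff]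
        intro e
        exact hpA (by rw [← e, ← gr]; exact ⟨t, rfl⟩)
    exact hpc.isConnected.isPreconnected
  exact henone p hpend
end
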